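/- Let f : (0,∞) → ℝ be twice differentiable and let A be the general spherically symmetric flat SO(3)-connection determined by f. Then the curvature F_{μν}{}^k := ∂_μ A_ν{}^k − ∂_ν A_μ{}^k + Σ_{i,j} A_μ{}^i A_ν{}^j ε_{ijk} vanishes identically on ℝ³∖{0}: F_{μν}{}^k(x) = 0 for all x ≠ 0 and all μ, ν, k. -/

import Mathlib

/-- The totally antisymmetric Levi-Civita symbol on three indices, `eps 0 1 2 = 1`. -/
noncomputable def eps (i j k : Fin 3) : ℝ :=
  ((j : ℝ) - (i : ℝ)) * ((k : ℝ) - (i : ℝ)) * ((k : ℝ) - (j : ℝ)) / 2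

/-- The radius `r = |x|` of a point `x ∈ ℝ³`. -/
noncomputable def rad (x : Fin 3 → ℝ) : ℝ := Real.sqrt (∑ i, x i ^ 2)

/-- The partial derivative `∂_μ g` at `x`. -/
noncomputable def pd (g : (Fin 3 → ℝ) → ℝ) (μ : Fin 3) (x : Fin 3 → ℝ) : ℝ :=
  fderiv ℝ g x (Pi.single μ 1)

/-- The general spherically symmetric flat SO(3)-connection determined by `f`:
`A_μ{}^i = ε_{μij} x_j (cos f - 1)/r² + δ_μ^i sin f / r + x_μ x^i (r f' - sin f)/r³`. -/
noncomputable def Aconn (f : ℝ → ℝ) (x : Fin 3 → ℝ) (μ i : Fin 3) : ℝ :=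
  (∑ j, eps μ i j * x j) * (Real.cos (f (rad x)) - 1) / rad x ^ 2 +
  (if μ = i then (1 : ℝ) else 0) * Real.sin (f (rad x)) / rad x +
  x μ * x i * (rad x * deriv f (rad x) - Real.sin (f (rad x))) / rad x ^ 3

/-!
Write `A_μ{}^i = a(r) ε_{μij} x_j + b(r) δ_μ^i + c(r) x_μ x^i`. Since `∂_μ φ(r) = φ'(r) x_μ / r`,
the curvature of any such radial ansatz is, pointwise, an identity in the coefficients:
`F_{μν}{}^k = C₁ ε_{μνk} + C₂ (ε_{μνj} x_j) x_k + C₃ (x_μ δ_{νk} - x_ν δ_{μk})` with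
`C₁ = 2a + b² + r² (a'/r + bc)`, `C₂ = a² - a'/r - bc`, `C₃ = b'/r - c - ab - acr²`.
For `a = (cos f - 1)/r²`, `b = sin f / r`, `c = (r f' - sin f)/r³` all three vanish,
`C₂` by `sin² f + cos² f = 1` and the other two identically.
-/

theorem sq_rad (x : Fin 3 → ℝ) : rad x ^ 2 = ∑ i, x i ^ 2 :=
  Real.sq_sqrt (by positivity)

theorem rad_pos {x : Fin 3 → ℝ} (hx : x ≠ 0) : 0 < rad x := by
  obtain ⟨i, hi⟩ := Function.ne_iff.mp hx
  exact Real.sqrt_pos.mpr <| (pow_pos (abs_pos.mpr hi) 2).trans_le <| by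
    rw [sq_abs]
    exact Finset.single_le_sum (fun j _ => sq_nonneg (x j)) (Finset.mem_univ i)

theorem hasFDerivAt_rad {x : Fin 3 → ℝ} (hx : x ≠ 0) :
    HasFDerivAt rad ((1 / (2 * rad x)) •
      ∑ i, (2 * x i) • ContinuousLinearMap.proj (R := ℝ) (φ := fun _ : Fin 3 => ℝ) i) x := by
  have hsum : HasFDerivAt (fun y : Fin 3 → ℝ => ∑ i, y i ^ 2)
      (∑ i, (2 * x i) • ContinuousLinearMap.proj (R := ℝ) (φ := fun _ : Fin 3 => ℝ) i) x := by
    refine HasFDerivAt.fun_sum fun i _ => ((hasFDerivAt_apply i x).pow 2).congr_fderiv ?_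
    simp
  exact hsum.sqrt (by rw [← sq_rad]; exact (pow_pos (rad_pos hx) 2).ne')

theorem differentiableAt_rad {x : Fin 3 → ℝ} (hx : x ≠ 0) : DifferentiableAt ℝ rad x :=
  (hasFDerivAt_rad hx).differentiableAt

theorem pd_rad {x : Fin 3 → ℝ} (hx : x ≠ 0) (μ : Fin 3) : pd rad μ x = x μ / rad x := by
  rw [pd, (hasFDerivAt_rad hx).fderiv]
  simp [Pi.single_apply]
  field_simp

noncomputable def sphAnsatz (a b c : ℝ) (x : Fin 3 → ℝ) (μ i : Fin 3) : ℝ :=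
  a * ∑ j, eps μ i j * x j + b * (if μ = i then 1 else 0) + c * (x μ * x i)

/-- `∂_μ` of `sphAnsatz` at `x`, with `a₁, b₁, c₁` standing for `a'(r)/r, b'(r)/r, c'(r)/r`. -/
noncomputable def sphAnsatzPd (a c a₁ b₁ c₁ : ℝ) (x : Fin 3 → ℝ) (μ ν k : Fin 3) : ℝ :=
  a * eps ν k μ + a₁ * x μ * ∑ j, eps ν k j * x j + b₁ * x μ * (if ν = k then 1 else 0) +
    c * ((if ν = μ then 1 else 0) * x k + x ν * (if k = μ then 1 else 0)) + c₁ * x μ * (x ν * x k)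

theorem pd_sphAnsatz {α β γ : ℝ → ℝ} {x : Fin 3 → ℝ} (hx : x ≠ 0)
    (hα : DifferentiableAt ℝ α (rad x)) (hβ : DifferentiableAt ℝ β (rad x))
    (hγ : DifferentiableAt ℝ γ (rad x)) (μ ν k : Fin 3) :
    pd (fun y => sphAnsatz (α (rad y)) (β (rad y)) (γ (rad y)) y ν k) μ x =
      sphAnsatzPd (α (rad x)) (γ (rad x)) (deriv α (rad x) / rad x) (deriv β (rad x) / rad x)
        (deriv γ (rad x) / rad x) x μ ν k := by
  have hrad := (differentiableAt_rad hx).hasFDerivAt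
  have hlin : HasFDerivAt (fun y : Fin 3 → ℝ => ∑ j, eps ν k j * y j)
      (∑ j, eps ν k j • ContinuousLinearMap.proj (R := ℝ) (φ := fun _ : Fin 3 => ℝ) j) x :=
    HasFDerivAt.fun_sum fun j _ => (hasFDerivAt_apply j x).const_smul (eps ν k j)
  have hsph : HasFDerivAt (fun y => sphAnsatz (α (rad y)) (β (rad y)) (γ (rad y)) y ν k) _ x :=
    (((hα.hasDerivAt.comp_hasFDerivAt x hrad).fun_mul hlin).fun_add
      ((hβ.hasDerivAt.comp_hasFDerivAt x hrad).mul_const (if ν = k then (1 : ℝ) else 0))).fun_add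
      ((hγ.hasDerivAt.comp_hasFDerivAt x hrad).fun_mul
        ((hasFDerivAt_apply ν x).fun_mul (hasFDerivAt_apply k x)))
  rw [pd, hsph.fderiv]
  have hradμ : fderiv ℝ rad x (Pi.single μ 1) = x μ / rad x := pd_rad hx μ
  simp only [sphAnsatzPd, Function.comp_apply, add_apply, smul_apply, sum_apply,
    ContinuousLinearMap.proj_apply, smul_eq_mul, hradμ, Pi.single_apply]
  simp only [mul_ite, mul_one, mul_zero, Finset.sum_ite_eq', Finset.mem_univ, if_true]
  split_ifs <;> ring

theorem sphAnsatz_curvature_eq (a b c a₁ b₁ c₁ : ℝ) (x : Fin 3 → ℝ) (μ ν k : Fin 3) :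
    sphAnsatzPd a c a₁ b₁ c₁ x μ ν k - sphAnsatzPd a c a₁ b₁ c₁ x ν μ k +
      ∑ i, ∑ j, sphAnsatz a b c x μ i * sphAnsatz a b c x ν j * eps i j k =
    (2 * a + b ^ 2 + (∑ j, x j ^ 2) * (a₁ + b * c)) * eps μ ν k +
      (a ^ 2 - a₁ - b * c) * (∑ j, eps μ ν j * x j) * x k +
      (b₁ - c - a * b - a * c * ∑ j, x j ^ 2) *
        (x μ * (if ν = k then 1 else 0) - x ν * (if μ = k then 1 else 0)) := by
  fin_cases μ <;> fin_cases ν <;> fin_cases k <;>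
    simp [sphAnsatz, sphAnsatzPd, eps, Fin.sum_univ_three] <;> ring

section

variable (f : ℝ → ℝ)

noncomputable def epsCoeff (t : ℝ) : ℝ := (Real.cos (f t) - 1) / t ^ 2

noncomputable def deltaCoeff (t : ℝ) : ℝ := Real.sin (f t) / t

noncomputable def radialCoeff (t : ℝ) : ℝ := (t * deriv f t - Real.sin (f t)) / t ^ 3

theorem Aconn_eq_sphAnsatz (x : Fin 3 → ℝ) (μ i : Fin 3) :
    Aconn f x μ i =
      sphAnsatz (epsCoeff f (rad x)) (deltaCoeff f (rad x)) (radialCoeff f (rad x)) x μ i := by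
  simp only [Aconn, sphAnsatz, epsCoeff, deltaCoeff, radialCoeff]
  ring

variable {f} {r : ℝ}

theorem hasDerivAt_epsCoeff (hf : DifferentiableAt ℝ f r) (hr : r ≠ 0) :
    HasDerivAt (epsCoeff f) (-(Real.sin (f r) * deriv f r) / r ^ 2 - 2 * epsCoeff f r / r) r := by
  have h := ((hf.hasDerivAt.cos).sub_const 1).div (hasDerivAt_pow 2 r) (pow_ne_zero 2 hr)
  refine h.congr_deriv ?_
  simp only [epsCoeff]
  field_simp
  ring

theorem hasDerivAt_deltaCoeff (hf : DifferentiableAt ℝ f r) (hr : r ≠ 0) :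
    HasDerivAt (deltaCoeff f) ((Real.cos (f r) * deriv f r - deltaCoeff f r) / r) r := by
  refine (hf.hasDerivAt.sin.div (hasDerivAt_id r) hr).congr_deriv ?_
  simp only [deltaCoeff, id]
  field_simp

theorem differentiableAt_radialCoeff (hf : DifferentiableAt ℝ f r)
    (hf' : DifferentiableAt ℝ (deriv f) r) (hr : r ≠ 0) : DifferentiableAt ℝ (radialCoeff f) r :=
  ((differentiableAt_id.mul hf').sub hf.sin).div (differentiableAt_pow 3) (pow_ne_zero 3 hr)

theorem flat_relation_eps (hf : DifferentiableAt ℝ f r) (hr : r ≠ 0) :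
    2 * epsCoeff f r + deltaCoeff f r ^ 2 +
      r ^ 2 * (deriv (epsCoeff f) r / r + deltaCoeff f r * radialCoeff f r) = 0 := by
  rw [(hasDerivAt_epsCoeff hf hr).deriv]
  simp only [epsCoeff, deltaCoeff, radialCoeff]
  field_simp
  ring

theorem flat_relation_radial (hf : DifferentiableAt ℝ f r) (hr : r ≠ 0) :
    epsCoeff f r ^ 2 - deriv (epsCoeff f) r / r - deltaCoeff f r * radialCoeff f r = 0 := by
  rw [(hasDerivAt_epsCoeff hf hr).deriv]
  simp only [epsCoeff, deltaCoeff, radialCoeff]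
  field_simp
  linear_combination Real.sin_sq_add_cos_sq (f r)

theorem flat_relation_delta (hf : DifferentiableAt ℝ f r) (hr : r ≠ 0) :
    deriv (deltaCoeff f) r / r - radialCoeff f r - epsCoeff f r * deltaCoeff f r -
      epsCoeff f r * radialCoeff f r * r ^ 2 = 0 := by
  rw [(hasDerivAt_deltaCoeff hf hr).deriv]
  simp only [epsCoeff, deltaCoeff, radialCoeff]
  field_simp
  ring

end

/-- the curvature of the general spherically symmetric flat
SO(3)-connection determined by a twice differentiable `f` vanishes on `ℝ³ ∖ {0}`. -/
theorem stmt4 (f : ℝ → ℝ)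
    (hf : ∀ r > 0, DifferentiableAt ℝ f r)
    (hf' : ∀ r > 0, DifferentiableAt ℝ (deriv f) r) :
    ∀ x : Fin 3 → ℝ, x ≠ 0 → ∀ μ ν k,
      pd (fun y => Aconn f y ν k) μ x - pd (fun y => Aconn f y μ k) ν x +
        ∑ i, ∑ j, Aconn f x μ i * Aconn f x ν j * eps i j k = 0 := by
  intro x hx μ ν k
  have hr := rad_pos hx
  have hr0 := hr.ne'
  have hfr := hf _ hr
  have hα := (hasDerivAt_epsCoeff hfr hr0).differentiableAt
  have hβ := (hasDerivAt_deltaCoeff hfr hr0).differentiableAt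
  have hγ := differentiableAt_radialCoeff hfr (hf' _ hr) hr0
  simp only [Aconn_eq_sphAnsatz]
  rw [pd_sphAnsatz hx hα hβ hγ, pd_sphAnsatz hx hα hβ hγ, sphAnsatz_curvature_eq, ← sq_rad,
    flat_relation_eps hfr hr0, flat_relation_radial hfr hr0, flat_relation_delta hfr hr0]
  ring
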